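/- Eve's success probability in guessing the key, given the ensemble of Eve's states $\{{\cal E}_E(|y\rangle\langle y|)\}_{y\in\mathbb{F}_2^l}$ with uniform prior from a Pauli channel with phase error probability $P_{ph}$, satisfies $P_{succ} \leq \left(\sqrt{P_{ph}}\sqrt{1-2^{-l}} + \sqrt{1-P_{ph}}\sqrt{2^{-l}}\right)^2$. -/

import Mathlib

open Matrix
open scoped ComplexOrder

open Classical in
/-- The positive-semidefinite square root of a matrix (junk value `0` off the PSD cone). -/
noncomputable def msqrt {ι : Type*} [Fintype ι] [DecidableEq ι]
    (A : Matrix ι ι ℂ) : Matrix ι ι ℂ :=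
  if h : A.PosSemidef then
    (h.1.eigenvectorUnitary : Matrix ι ι ℂ) *
      diagonal ((↑) ∘ (√·) ∘ h.1.eigenvalues) *
      (star h.1.eigenvectorUnitary : Matrix ι ι ℂ)
  else 0

/-- The Uhlmann fidelity `F(ρ, ρ') = Tr √(√ρ' ρ √ρ')`. -/
noncomputable def fidelity {ι : Type*} [Fintype ι] [DecidableEq ι]
    (ρ ρ' : Matrix ι ι ℂ) : ℝ :=
  ((msqrt (msqrt ρ' * ρ * msqrt ρ')).trace).re

/-- The marginal `P(x) = ∑ z P(x, z)`. -/
noncomputable def margP (l : ℕ)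
    (P : (Fin l → ZMod 2) × (Fin l → ZMod 2) → ℝ) (x : Fin l → ZMod 2) : ℝ :=
  ∑ z, P (x, z)

/-- Eve's vector `|P,y,x⟩ = ∑ z (-1)^{z·y} √(P(z|x)) |(x,z)⟩`. -/
noncomputable def eveKet (l : ℕ)
    (P : (Fin l → ZMod 2) × (Fin l → ZMod 2) → ℝ)
    (y x : Fin l → ZMod 2) :
    ((Fin l → ZMod 2) × (Fin l → ZMod 2)) → ℂ :=
  fun w =>
    if w.1 = x then
      (-1 : ℂ) ^ ((w.2 ⬝ᵥ y : ZMod 2)).val *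
        (Real.sqrt (P (x, w.2) / margP l P x) : ℝ)
    else 0

/-- Eve's state `ρ_y = ∑ x P(x) |P,y,x⟩⟨P,y,x|` after Alice sends `|y⟩` in the `+`
basis through a Pauli channel with error distribution `P`. -/
noncomputable def eveState (l : ℕ)
    (P : (Fin l → ZMod 2) × (Fin l → ZMod 2) → ℝ)
    (y : Fin l → ZMod 2) :
    Matrix ((Fin l → ZMod 2) × (Fin l → ZMod 2))
      ((Fin l → ZMod 2) × (Fin l → ZMod 2)) ℂ :=
  ∑ x, (margP l P x : ℂ) • Matrix.vecMulVec (eveKet l P y x) (star (eveKet l P y x))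

/-!
For fixed `x`, the vectors `|P,y,x⟩` have entry moduli `√P(z|x)` independent of `y`. Writing
`M_y = B_y⋆ B_y`, the triangle inequality bounds `‖B_y |P,y,x⟩‖` by `∑_z √P(z|x) ‖B_y e_z‖`, and
since `∑_y ‖B_y e_z‖² = 1` for every `z`, Cauchy–Schwarz over `y` gives
`∑_y ⟨P,y,x| M_y |P,y,x⟩ ≤ (∑_z √P(z|x))²`. Weighting by `P(x)` and the prior `2^{-l}`, one splits off
the term `z = 0`, bounds the other `2^l - 1` terms by Cauchy–Schwarz, and Minkowski's inequality
in `x` turns `∑_x P(x,0) = 1 - P_ph` into the stated bound.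
-/

open scoped MatrixOrder

section QuadraticForms

variable {ι : Type*} [Fintype ι]

lemma re_star_dotProduct_self (w : ι → ℂ) : (star w ⬝ᵥ w).re = ‖WithLp.toLp 2 w‖ ^ 2 := by
  rw [← inner_self_eq_norm_sq (𝕜 := ℂ), EuclideanSpace.inner_toLp_toLp, dotProduct_comm]
  rfl

lemma trace_vecMulVec_mul (v w : ι → ℂ) (M : Matrix ι ι ℂ) :
    (vecMulVec v w * M).trace = w ⬝ᵥ M *ᵥ v := by
  rw [vecMulVec_mul, trace_vecMulVec, dotProduct_comm, dotProduct_mulVec]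

lemma Matrix.PosSemidef.re_dotProduct_mulVec_le {M : Matrix ι ι ℂ} (hM : M.PosSemidef)
    {φ : ι → ℂ} {c : ι → ℝ} (hφ : ∀ i, ‖φ i‖ ≤ c i) :
    (star φ ⬝ᵥ M *ᵥ φ).re ≤ (∑ i, c i * √(M i i).re) ^ 2 := by
  classical
  obtain ⟨B, rfl⟩ := CStarAlgebra.nonneg_iff_eq_star_mul_self.mp hM.nonneg
  have hcol : ∀ i, √((star B * B) i i).re = ‖WithLp.toLp 2 (Bᵀ i)‖ := fun i => by
    rw [← Real.sqrt_sq (norm_nonneg _), ← re_star_dotProduct_self]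
    simp [mul_apply, dotProduct]
  have hcols : B *ᵥ φ = ∑ i, φ i • Bᵀ i := by
    ext k
    simp [mulVec, dotProduct, Finset.sum_apply, mul_comm]
  have hquad : (star φ ⬝ᵥ (star B * B) *ᵥ φ).re = ‖WithLp.toLp 2 (B *ᵥ φ)‖ ^ 2 := by
    rw [← re_star_dotProduct_self, ← mulVec_mulVec, dotProduct_mulVec, star_mulVec]
    rfl
  have hle : ‖WithLp.toLp 2 (B *ᵥ φ)‖ ≤ ∑ i, c i * √((star B * B) i i).re := by
    rw [hcols, WithLp.toLp_sum]
    refine (norm_sum_le _ _).trans (Finset.sum_le_sum fun i _ => ?_)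
    rw [WithLp.toLp_smul, norm_smul, hcol]
    exact mul_le_mul_of_nonneg_right (hφ i) (norm_nonneg _)
  rw [hquad]
  exact pow_le_pow_left₀ (norm_nonneg _) hle 2

lemma sum_sq_sum_mul_sqrt_le {Y : Type*} [Fintype Y] {w : Y → ι → ℝ}
    (hw0 : ∀ y i, 0 ≤ w y i) (hw1 : ∀ i, ∑ y, w y i = 1) {c : ι → ℝ} (hc : ∀ i, 0 ≤ c i) :
    ∑ y, (∑ i, c i * √(w y i)) ^ 2 ≤ (∑ i, c i) ^ 2 := by
  have hcs : ∀ i j, ∑ y, √(w y i) * √(w y j) ≤ 1 := fun i j => by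
    simpa [hw1] using Real.sum_sqrt_mul_sqrt_le Finset.univ (hw0 · i) (hw0 · j)
  calc ∑ y, (∑ i, c i * √(w y i)) ^ 2
      = ∑ i, ∑ j, c i * c j * ∑ y, √(w y i) * √(w y j) := by
        simp_rw [sq, Finset.sum_mul_sum, Finset.mul_sum]
        rw [Finset.sum_comm]
        refine Finset.sum_congr rfl fun i _ => ?_
        rw [Finset.sum_comm]
        exact Finset.sum_congr rfl fun j _ => Finset.sum_congr rfl fun y _ => by ring
    _ ≤ ∑ i, ∑ j, c i * c j :=
        Finset.sum_le_sum fun i _ => Finset.sum_le_sum fun j _ =>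
          mul_le_of_le_one_right (mul_nonneg (hc i) (hc j)) (hcs i j)
    _ = (∑ i, c i) ^ 2 := by rw [sq, Finset.sum_mul_sum]

lemma sum_re_dotProduct_mulVec_le_of_sum_eq_one [DecidableEq ι] {Y : Type*} [Fintype Y]
    {M : Y → Matrix ι ι ℂ} (hM : ∀ y, (M y).PosSemidef) (hsum : ∑ y, M y = 1)
    {φ : Y → ι → ℂ} {c : ι → ℝ} (hc : ∀ i, 0 ≤ c i) (hφ : ∀ y i, ‖φ y i‖ ≤ c i) :
    ∑ y, (star (φ y) ⬝ᵥ M y *ᵥ φ y).re ≤ (∑ i, c i) ^ 2 := by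
  have hdiag : ∀ i, ∑ y, (M y i i).re = 1 := fun i => by
    rw [← Complex.re_sum, ← Matrix.sum_apply, hsum, one_apply_eq, Complex.one_re]
  calc ∑ y, (star (φ y) ⬝ᵥ M y *ᵥ φ y).re
      ≤ ∑ y, (∑ i, c i * √(M y i i).re) ^ 2 :=
        Finset.sum_le_sum fun y _ => (hM y).re_dotProduct_mulVec_le (hφ y)
    _ ≤ (∑ i, c i) ^ 2 :=
        sum_sq_sum_mul_sqrt_le (fun y i => (Complex.nonneg_iff.mp (hM y).diag_nonneg).1) hdiag hc

end QuadraticForms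

section SqrtSums

open Finset

lemma sum_sqrt_le_sqrt_add_sqrt_card_sub_one_mul {Z : Type*} [Fintype Z] [DecidableEq Z]
    {g : Z → ℝ} (hg : ∀ z, 0 ≤ g z) (z₀ : Z) :
    ∑ z, √(g z) ≤ √(g z₀) + √(Fintype.card Z - 1) * √(∑ z ∈ univ.erase z₀, g z) := by
  rw [← add_sum_erase _ _ (mem_univ z₀)]
  have hcs := Real.sum_sqrt_mul_sqrt_le (univ.erase z₀) (fun _ => zero_le_one) hg
  simp only [Real.sqrt_one, one_mul, sum_const, card_erase_of_mem (mem_univ _), card_univ,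
    nsmul_eq_mul, mul_one] at hcs
  rw [Nat.cast_sub (Fintype.card_pos_iff.mpr ⟨z₀⟩), Nat.cast_one] at hcs
  gcongr

lemma sum_mul_add_mul_sq_le {X : Type*} [Fintype X] {a b : ℝ} (ha : 0 ≤ a) (hb : 0 ≤ b)
    (u v : X → ℝ) :
    ∑ x, (a * u x + b * v x) ^ 2 ≤ (a * √(∑ x, u x ^ 2) + b * √(∑ x, v x ^ 2)) ^ 2 := by
  have hcs := Real.sum_mul_le_sqrt_mul_sqrt univ u v
  have hu := Real.sq_sqrt (sum_nonneg fun x (_ : x ∈ univ) => sq_nonneg (u x))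
  have hv := Real.sq_sqrt (sum_nonneg fun x (_ : x ∈ univ) => sq_nonneg (v x))
  have hexpand : ∑ x, (a * u x + b * v x) ^ 2 =
      a ^ 2 * ∑ x, u x ^ 2 + 2 * a * b * ∑ x, u x * v x + b ^ 2 * ∑ x, v x ^ 2 := by
    simp only [mul_sum, ← sum_add_distrib]
    exact sum_congr rfl fun x _ => by ring
  rw [hexpand]
  nlinarith [mul_le_mul_of_nonneg_left hcs (mul_nonneg ha hb)]

lemma inv_card_mul_sum_sq_sum_sqrt_le {X Z : Type*} [Fintype X] [Fintype Z] [DecidableEq Z]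
    {f : X × Z → ℝ} (hf0 : ∀ w, 0 ≤ f w) (hf1 : ∑ w, f w = 1) (z₀ : Z) :
    (Fintype.card Z : ℝ)⁻¹ * ∑ x, (∑ z, √(f (x, z))) ^ 2 ≤
      (√(1 - ∑ x, f (x, z₀)) * √(1 - (Fintype.card Z : ℝ)⁻¹) +
        √(∑ x, f (x, z₀)) * √((Fintype.card Z : ℝ)⁻¹)) ^ 2 := by
  set N : ℝ := (Fintype.card Z : ℝ)
  set q := ∑ x, f (x, z₀)
  have hN : 1 ≤ N := Nat.one_le_cast.mpr (Fintype.card_pos_iff.mpr ⟨z₀⟩)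
  have hscale : √N⁻¹ * √(N - 1) = √(1 - N⁻¹) := by
    rw [← Real.sqrt_mul (by positivity), mul_sub, inv_mul_cancel₀ (by positivity), mul_one]
  have hrest : ∑ x, ∑ z ∈ univ.erase z₀, f (x, z) = 1 - q := by
    simp_rw [sum_erase_eq_sub (mem_univ z₀), sum_sub_distrib, ← Fintype.sum_prod_type, hf1, q]
  calc N⁻¹ * ∑ x, (∑ z, √(f (x, z))) ^ 2
      = ∑ x, (√N⁻¹ * ∑ z, √(f (x, z))) ^ 2 := by
        simp_rw [mul_pow, Real.sq_sqrt (inv_nonneg.mpr (zero_le_one.trans hN)), mul_sum]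
    _ ≤ ∑ x, (√N⁻¹ * √(f (x, z₀)) + √(1 - N⁻¹) * √(∑ z ∈ univ.erase z₀, f (x, z))) ^ 2 := by
        gcongr with x
        rw [← hscale, mul_assoc, ← mul_add]
        gcongr
        exact sum_sqrt_le_sqrt_add_sqrt_card_sub_one_mul (fun z => hf0 (x, z)) z₀
    _ ≤ (√N⁻¹ * √q + √(1 - N⁻¹) * √(1 - q)) ^ 2 := by
        convert sum_mul_add_mul_sq_le (Real.sqrt_nonneg _) (Real.sqrt_nonneg _) _ _ using 4
        · simp_rw [Real.sq_sqrt (hf0 _), q]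
        · simp_rw [Real.sq_sqrt (sum_nonneg fun z _ => hf0 _), hrest]
    _ = (√(1 - q) * √(1 - N⁻¹) + √q * √N⁻¹) ^ 2 := by ring

end SqrtSums

section EveStates

variable {l : ℕ} {P : (Fin l → ZMod 2) × (Fin l → ZMod 2) → ℝ}

lemma margP_nonneg (hP0 : ∀ w, 0 ≤ P w) (x : Fin l → ZMod 2) : 0 ≤ margP l P x :=
  Finset.sum_nonneg fun z _ => hP0 (x, z)

lemma margP_mul_sq_sum_sqrt_div (hP0 : ∀ w, 0 ≤ P w) (x : Fin l → ZMod 2) :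
    margP l P x * (∑ z, √(P (x, z) / margP l P x)) ^ 2 = (∑ z, √(P (x, z))) ^ 2 := by
  rcases eq_or_ne (margP l P x) 0 with h | h
  · have hz : ∀ z, P (x, z) = 0 := fun z =>
      (Finset.sum_eq_zero_iff_of_nonneg fun z _ => hP0 (x, z)).mp h z (Finset.mem_univ z)
    simp [h, hz]
  · calc margP l P x * (∑ z, √(P (x, z) / margP l P x)) ^ 2
        = (√(margP l P x) * ∑ z, √(P (x, z) / margP l P x)) ^ 2 := by
          rw [mul_pow, Real.sq_sqrt (margP_nonneg hP0 x)]
      _ = (∑ z, √(P (x, z))) ^ 2 := by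
          simp_rw [Finset.mul_sum, ← Real.sqrt_mul (margP_nonneg hP0 x), mul_div_cancel₀ _ h]

lemma norm_eveKet (y x : Fin l → ZMod 2) (w : (Fin l → ZMod 2) × (Fin l → ZMod 2)) :
    ‖eveKet l P y x w‖ = if w.1 = x then √(P (x, w.2) / margP l P x) else 0 := by
  unfold eveKet
  split_ifs <;> simp

lemma re_trace_eveState_mul (y : Fin l → ZMod 2)
    (M : Matrix ((Fin l → ZMod 2) × (Fin l → ZMod 2)) ((Fin l → ZMod 2) × (Fin l → ZMod 2)) ℂ) :
    ((eveState l P y * M).trace).re =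
      ∑ x, margP l P x * (star (eveKet l P y x) ⬝ᵥ M *ᵥ eveKet l P y x).re := by
  simp only [eveState, Finset.sum_mul, trace_sum, Complex.re_sum, smul_mul_assoc, trace_smul,
    trace_vecMulVec_mul, smul_eq_mul, Complex.re_ofReal_mul]

lemma sum_re_eveKet_le {M : (Fin l → ZMod 2) →
      Matrix ((Fin l → ZMod 2) × (Fin l → ZMod 2)) ((Fin l → ZMod 2) × (Fin l → ZMod 2)) ℂ}
    (hMpos : ∀ y, (M y).PosSemidef) (hMsum : ∑ y, M y = 1) (x : Fin l → ZMod 2) :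
    ∑ y, (star (eveKet l P y x) ⬝ᵥ M y *ᵥ eveKet l P y x).re ≤
      (∑ z, √(P (x, z) / margP l P x)) ^ 2 := by
  convert sum_re_dotProduct_mulVec_le_of_sum_eq_one hMpos hMsum
    (c := fun w => if w.1 = x then √(P (x, w.2) / margP l P x) else 0)
    (fun w => by split_ifs <;> simp) (fun y w => (norm_eveKet y x w).le) using 2
  simp [Fintype.sum_prod_type]

end EveStates

/-- Eve's optimal success probability in guessing the final key from the ensemble of
states `{ρ_y}` (with uniform prior) of a Pauli channel with phase error probability
`P_ph = 1 - ∑ x P(x,0)` is bounded:  for every POVM `{M_y}`,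
`2^{-l} ∑_y Tr(ρ_y M_y) ≤ (√P_ph √(1-2^{-l}) + √(1-P_ph) √(2^{-l}))²`. -/
theorem eve_success_prob_le (l : ℕ)
    (P : (Fin l → ZMod 2) × (Fin l → ZMod 2) → ℝ)
    (hP0 : ∀ w, 0 ≤ P w) (hP1 : ∑ w, P w = 1)
    (M : (Fin l → ZMod 2) →
      Matrix ((Fin l → ZMod 2) × (Fin l → ZMod 2))
        ((Fin l → ZMod 2) × (Fin l → ZMod 2)) ℂ)
    (hMpos : ∀ y, (M y).PosSemidef) (hMsum : ∑ y, M y = 1) :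
    ((2 : ℝ) ^ l)⁻¹ * ∑ y, ((eveState l P y * M y).trace).re ≤
      (Real.sqrt (1 - ∑ x, P (x, 0)) * Real.sqrt (1 - ((2 : ℝ) ^ l)⁻¹) +
        Real.sqrt (∑ x, P (x, 0)) * Real.sqrt (((2 : ℝ) ^ l)⁻¹)) ^ 2 := by
  have hcard : (Fintype.card (Fin l → ZMod 2) : ℝ) = 2 ^ l := by simp
  calc ((2 : ℝ) ^ l)⁻¹ * ∑ y, ((eveState l P y * M y).trace).re
      = ((2 : ℝ) ^ l)⁻¹ * ∑ x, margP l P x *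
          ∑ y, (star (eveKet l P y x) ⬝ᵥ M y *ᵥ eveKet l P y x).re := by
        simp_rw [re_trace_eveState_mul, Finset.mul_sum]
        rw [Finset.sum_comm]
    _ ≤ ((2 : ℝ) ^ l)⁻¹ * ∑ x, margP l P x * (∑ z, √(P (x, z) / margP l P x)) ^ 2 := by
        gcongr with x
        · exact margP_nonneg hP0 x
        · exact sum_re_eveKet_le hMpos hMsum x
    _ = ((2 : ℝ) ^ l)⁻¹ * ∑ x, (∑ z, √(P (x, z))) ^ 2 := by
        simp_rw [margP_mul_sq_sum_sqrt_div hP0]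
    _ ≤ _ := hcard ▸ inv_card_mul_sum_sq_sum_sqrt_le hP0 hP1 0
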